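/- arXiv:1411.7729 — 2 statements merged into one kernel-verified Lean document; each statement's English description precedes it below -/
import Mathlib

section
/- Let 𝓕 be a filter on ℕ, r ∈ ℕ, and B_w a bilateral weighted backward shift with bounded weight w = (w_k)_{k∈ℤ} on X = ℓ^p(ℤ) (1 ≤ p < ∞) or c₀(ℤ). Then the following are equivalent: (i) A_{M;j} ∈ l𝓕 and Ā_{M;j} ∈ l𝓕 for every 1 ≤ l ≤ r, every M > 0 and every j ∈ ℤ; (ii) B_w ⊕ B_w² ⊕ ⋯ ⊕ B_w^r is an 𝓕-operator on X^r. -/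
open Filter Topology
open scoped ENNReal

noncomputable def blockCount (A : Set ℕ) (k s : ℕ) : ℕ :=
  Nat.card (A ∩ Set.Icc (k + 1) (k + s) : Set ℕ)

/-- upper Banach density -/
noncomputable def upperBanachDensity (A : Set ℕ) : ℝ :=
  Filter.limsup (fun s : ℕ =>
    (Filter.limsup (fun k : ℕ => (blockCount A k s : ℝ)) Filter.atTop) / s) Filter.atTop

/-- lower Banach density -/
noncomputable def lowerBanachDensity (A : Set ℕ) : ℝ :=
  Filter.liminf (fun s : ℕ =>
    (Filter.liminf (fun k : ℕ => (blockCount A k s : ℝ)) Filter.atTop) / s) Filter.atTop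

/-- the family `BD̄` of sets of positive upper Banach density -/
def upperBD (A : Set ℕ) : Prop := 0 < upperBanachDensity A

/-- the family `BD₁` of sets of lower Banach density one -/
def BDone (A : Set ℕ) : Prop := lowerBanachDensity A = 1

/-- essential idempotent ultrafilter -/
def IsEssentialIdempotent (p : Ultrafilter ℕ) : Prop :=
  (∀ A : Set ℕ, A ∈ p ↔ {n : ℕ | {m : ℕ | n + m ∈ A} ∈ p} ∈ p) ∧
    ∀ A ∈ p, 0 < upperBanachDensity A

/-- membership in `𝒟*`, the intersection of all essential idempotents -/
def InDstar (A : Set ℕ) : Prop :=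
  ∀ p : Ultrafilter ℕ, IsEssentialIdempotent p → A ∈ p

/-- limit of a real sequence along a family of subsets of ℕ -/
def FamilyLim (F : Set ℕ → Prop) (x : ℕ → ℝ) (y : ℝ) : Prop :=
  ∀ V : Set ℝ, IsOpen V → y ∈ V → F {n | x n ∈ V}

/-- property `P_𝓕` for a sequence of maps -/
def SatisfiesP {X : Type*} [TopologicalSpace X] (T : ℕ → X → X) (F : Set ℕ → Prop) : Prop :=
  ∀ U : Set X, IsOpen U → U.Nonempty → ∃ x : X, F {n | T n x ∈ U}

/-- topological 𝒟-recurrence with respect to a sequence of scalars -/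
def TopDRecurrentWrt {X : Type*} [NormedAddCommGroup X] [NormedSpace ℂ X]
    (T : X →L[ℂ] X) (l : ℕ → ℂ) : Prop :=
  ∃ p : Ultrafilter ℕ, IsEssentialIdempotent p ∧
    ∀ U : Set X, IsOpen U → U.Nonempty → ∃ x : X, ∀ r : ℕ,
      {k : ℕ | 0 < upperBanachDensity
        {a : ℕ | ∀ j ≤ r, (T ^ (j * k)) (l a • (T ^ a) x) ∈ U}} ∈ p

/-- topological 𝒟-recurrence -/
def TopDRecurrent {X : Type*} [NormedAddCommGroup X] [NormedSpace ℂ X]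
    (T : X →L[ℂ] X) : Prop :=
  TopDRecurrentWrt T fun _ => 1

/-- reiterative hypercyclicity for a sequence of maps -/
def ReiterativelyHypercyclicSeq {X : Type*} [TopologicalSpace X] (T : ℕ → X → X) : Prop :=
  ∃ x : X, ∀ U : Set X, IsOpen U → U.Nonempty → 0 < upperBanachDensity {n | T n x ∈ U}

/-- 𝒟-reiterative hypercyclicity with respect to a sequence of scalars -/
def DReiterativelyHypercyclicWrt {X : Type*} [NormedAddCommGroup X] [NormedSpace ℂ X]
    (T : X →L[ℂ] X) (l : ℕ → ℂ) : Prop :=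
  ∃ p : Ultrafilter ℕ, IsEssentialIdempotent p ∧ ∃ x : X,
    ∀ U : Set X, IsOpen U → U.Nonempty → ∀ r : ℕ,
      {k : ℕ | 0 < upperBanachDensity
        {a : ℕ | ∀ j ≤ r, (T ^ (j * k)) (l a • (T ^ a) x) ∈ U}} ∈ p

/-- hypercyclic operator -/
def Hypercyclic {X : Type*} [NormedAddCommGroup X] [NormedSpace ℂ X] (T : X →L[ℂ] X) : Prop :=
  ∃ x : X, Dense (Set.range fun n : ℕ => (T ^ n) x)

/-- topological multiple recurrence -/
def TopMultiplyRecurrent {X : Type*} [NormedAddCommGroup X] [NormedSpace ℂ X]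
    (T : X →L[ℂ] X) : Prop :=
  ∀ U : Set X, IsOpen U → U.Nonempty → ∀ r : ℕ, ∃ k : ℕ, 0 < k ∧
    ∃ x : X, ∀ j ≤ r, (T ^ (j * k)) x ∈ U

/-- `𝓕`-operator -/
def FOperator {X : Type*} [NormedAddCommGroup X] [NormedSpace ℂ X]
    (F : Set ℕ → Prop) (T : X →L[ℂ] X) : Prop :=
  ∀ U V : Set X, IsOpen U → IsOpen V → U.Nonempty → V.Nonempty →
    F {n : ℕ | ∃ x ∈ U, (T ^ n) x ∈ V}

/-- mixing operator -/
def MixingOp {X : Type*} [NormedAddCommGroup X] [NormedSpace ℂ X]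
    (T : X →L[ℂ] X) : Prop :=
  ∀ U V : Set X, IsOpen U → IsOpen V → U.Nonempty → V.Nonempty →
    {n : ℕ | ∃ x ∈ U, (T ^ n) x ∈ V} ∈ Filter.cofinite

/-- recurrent operator -/
def RecurrentOp {X : Type*} [NormedAddCommGroup X] [NormedSpace ℂ X]
    (T : X →L[ℂ] X) : Prop :=
  ∀ U : Set X, IsOpen U → U.Nonempty →
    ∃ n : ℕ, 0 < n ∧ (U ∩ (fun x => (T ^ n) x) ⁻¹' U).Nonempty

/-- syndetic set -/
def Syndetic (A : Set ℕ) : Prop :=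
  ∃ k : ℕ, 0 < k ∧ ∀ n : ℕ, ∃ i : ℕ, 1 ≤ i ∧ i ≤ k ∧ n + i ∈ A

/-- upper (asymptotic) density -/
noncomputable def upperDensity (A : Set ℕ) : ℝ :=
  Filter.limsup (fun n : ℕ => (Nat.card (A ∩ Set.Icc 1 n : Set ℕ) : ℝ) / n) Filter.atTop

/-- bounded weight -/
def BddWeight {ι : Type*} (w : ι → ℂ) : Prop := ∃ C : ℝ, ∀ i, ‖w i‖ ≤ C

/-- unilateral weighted backward shift relative to a basis `e` -/
def IsUnilateralWeightedShift {X : Type*} [NormedAddCommGroup X] [NormedSpace ℂ X]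
    (e : ℕ → X) (w : ℕ → ℂ) (B : X →L[ℂ] X) : Prop :=
  B (e 0) = 0 ∧ ∀ n : ℕ, B (e (n + 1)) = w (n + 1) • e n

/-- bilateral weighted backward shift relative to a basis `e` -/
def IsBilateralWeightedShift {X : Type*} [NormedAddCommGroup X] [NormedSpace ℂ X]
    (e : ℤ → X) (w : ℤ → ℂ) (B : X →L[ℂ] X) : Prop :=
  ∀ k : ℤ, B (e k) = w k • e (k - 1)

/-- `B ⊕ B² ⊕ ⋯ ⊕ B^r` acting on `X^r` -/
noncomputable def directSumPow {X : Type*} [NormedAddCommGroup X] [NormedSpace ℂ X]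
    (T : X →L[ℂ] X) (r : ℕ) : (Fin r → X) →L[ℂ] (Fin r → X) :=
  ContinuousLinearMap.pi fun i => (T ^ ((i : ℕ) + 1)).comp (ContinuousLinearMap.proj i)

/-- canonical basis vector of `c₀` over a discrete index type -/
noncomputable def c0Single {α : Type*} [TopologicalSpace α] [DiscreteTopology α]
    [DecidableEq α] (k : α) : ZeroAtInftyContinuousMap α ℂ where
  toFun := fun m => if m = k then 1 else 0
  continuous_toFun := continuous_of_discreteTopology
  zero_at_infty' := by
    rw [Filter.cocompact_eq_cofinite]
    refine Filter.Tendsto.congr' ?_ tendsto_const_nhds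
    filter_upwards [Filter.eventually_cofinite_ne k] with m hm
    simp [hm]

/-- the set `A_{M;j}` for a bilateral weight -/
def AMjZ (w : ℤ → ℂ) (M : ℝ) (j : ℤ) : Set ℕ :=
  {n : ℕ | M < ∏ i ∈ Finset.Icc (j + 1) (j + (n : ℤ)), ‖w i‖}

/-- the set `Ā_{M;j}` for a bilateral weight -/
def AbarMjZ (w : ℤ → ℂ) (M : ℝ) (j : ℤ) : Set ℕ :=
  {n : ℕ | ∏ i ∈ Finset.Icc (j - (n : ℤ) + 1) j, ‖w i‖ < 1 / M}

/-- the set `A_{M;j}` for a unilateral weight -/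
def AMjN (w : ℕ → ℂ) (M : ℝ) (j : ℕ) : Set ℕ :=
  {n : ℕ | M < ∏ i ∈ Finset.Icc (j + 1) (j + n), ‖w i‖}
/-!
With `f_j` the coordinate functionals, `f_j (B^m x) = (∏_{i=j+1}^{j+m} w_i) f_{j+m} x`.

(i) ⇒ (ii): along the filter `{A | {n | l n ∈ A} ∈ 𝓕}` the products over `[j+1, j+m]` tend to
`∞` and those over `[j-m+1, j]` tend to `0`. Hence `B^m a → 0` for finitely supported `a`, and
every finitely supported `b` is `B^m u_m` for weighted forward shifts `u_m → 0` of `b`. Taking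
`a ∈ U` and `b ∈ V` with finitely supported components, `z_n = a + (u_{(i+1)n})_i` lies in `U`
and `T^n z_n = (B^{(i+1)n} a_i)_i + b` lies in `V` for `𝓕`-almost all `n`.

(ii) ⇒ (i): use the `𝓕`-operator property on the `l`-th component, with the balls of radius
`1/(2M)` around `0` and of radius `1/2` around `e_j`; the coordinate formula then forces
`M < ∏_{i=j+1}^{j+ln} |w_i|`, and with the two balls swapped `∏_{i=j-ln+1}^{j} |w_i| < 1/M`.
-/

def filterOfFamily {α : Type*} (F : Set (Set α)) (hne : F.Nonempty)
    (hup : ∀ A ∈ F, ∀ B : Set α, A ⊆ B → B ∈ F) (hcap : ∀ A ∈ F, ∀ B ∈ F, A ∩ B ∈ F) :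
    Filter α where
  sets := F
  univ_sets := hne.elim fun A hA => hup A hA _ (Set.subset_univ A)
  sets_of_superset hA hAB := hup _ hA _ hAB
  inter_sets hA hB := hcap _ hA _ hB

lemma tendsto_prod_norm_atTop_of_forall_mem_AMjZ {w : ℤ → ℂ} {j : ℤ} {L : Filter ℕ}
    (h : ∀ M > (0 : ℝ), AMjZ w M j ∈ L) :
    Tendsto (fun n : ℕ => ∏ i ∈ Finset.Icc (j + 1) (j + n), ‖w i‖) L atTop :=
  tendsto_atTop.2 fun b => by
    filter_upwards [h (max b 1) (by positivity)] with n hn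
    exact (le_max_left b 1).trans hn.le

lemma tendsto_prod_norm_nhds_zero_of_forall_mem_AbarMjZ {w : ℤ → ℂ} {j : ℤ} {L : Filter ℕ}
    (h : ∀ M > (0 : ℝ), AbarMjZ w M j ∈ L) :
    Tendsto (fun n : ℕ => ∏ i ∈ Finset.Icc (j - n + 1) j, ‖w i‖) L (𝓝 0) := by
  refine Metric.tendsto_nhds.2 fun ε hε => ?_
  filter_upwards [h ε⁻¹ (inv_pos.2 hε)] with n hn
  have hn : ∏ i ∈ Finset.Icc (j - n + 1) j, ‖w i‖ < ε := by simpa [AbarMjZ] using hn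
  rwa [Real.dist_0_eq_abs, abs_of_nonneg (by positivity)]

lemma dense_span_range_of_hasSum {ι X : Type*} [NormedAddCommGroup X] [NormedSpace ℂ X]
    {e : ι → X} (h : ∀ x, ∃ c : ι → ℂ, HasSum (fun k => c k • e k) x) :
    Dense (Submodule.span ℂ (Set.range e) : Set X) := fun x =>
  let ⟨_, hc⟩ := h x
  mem_closure_of_tendsto hc <| Eventually.of_forall fun _ =>
    Submodule.sum_mem _ fun k _ => Submodule.smul_mem _ _ (Submodule.subset_span ⟨k, rfl⟩)

section DirectSumPow

variable {X : Type*} [NormedAddCommGroup X] [NormedSpace ℂ X]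

lemma directSumPow_pow_apply (T : X →L[ℂ] X) (r n : ℕ) (z : Fin r → X) (i : Fin r) :
    (directSumPow T r ^ n) z i = (T ^ (((i : ℕ) + 1) * n)) (z i) := by
  induction n generalizing z with
  | zero => simp
  | succ n ih =>
    have hT (y : Fin r → X) : directSumPow T r y i = (T ^ ((i : ℕ) + 1)) (y i) := rfl
    rw [pow_succ', mul_apply_eq_comp, hT, ih, ← mul_apply_eq_comp, ← pow_add, mul_add_one,
      add_comm]

lemma FOperator.directSumPow_pow_mem {𝓕 : Filter ℕ} {T : X →L[ℂ] X} {r : ℕ}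
    (hT : FOperator (· ∈ 𝓕) (directSumPow T r)) (i : Fin r) {U V : Set X}
    (hU : IsOpen U) (hV : IsOpen V) (hUne : U.Nonempty) (hVne : V.Nonempty) :
    {n : ℕ | ∃ x ∈ U, (T ^ (((i : ℕ) + 1) * n)) x ∈ V} ∈ 𝓕 := by
  obtain ⟨x, hx⟩ := hUne
  obtain ⟨y, hy⟩ := hVne
  refine mem_of_superset (hT ((· i) ⁻¹' U) ((· i) ⁻¹' V)
    (hU.preimage (continuous_apply i)) (hV.preimage (continuous_apply i))
    ⟨fun _ => x, hx⟩ ⟨fun _ => y, hy⟩) ?_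
  rintro n ⟨z, hz, hTz⟩
  exact ⟨z i, hz, by rwa [Set.mem_preimage, directSumPow_pow_apply] at hTz⟩

end DirectSumPow

lemma one_half_lt_norm_apply_of_norm_sub_lt {X : Type*} [NormedAddCommGroup X]
    [NormedSpace ℂ X] {e : ℤ → X} {f : ℤ → X →L[ℂ] ℂ}
    (hfe : ∀ j k, f j (e k) = if k = j then 1 else 0)
    (hfn : ∀ j x, ‖f j x‖ ≤ ‖x‖) {j : ℤ} {x : X} (hx : ‖x - e j‖ < 1 / 2) :
    1 / 2 < ‖f j x‖ := by
  have h : ‖f j x - 1‖ < 1 / 2 := by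
    simpa [hfe] using (hfn j (x - e j)).trans_lt hx
  have := norm_sub_norm_le (1 : ℂ) (f j x)
  rw [norm_one, norm_sub_rev] at this
  linarith

namespace IsBilateralWeightedShift

variable {X : Type*} [NormedAddCommGroup X] [NormedSpace ℂ X]
  {w : ℤ → ℂ} {e : ℤ → X} {f : ℤ → X →L[ℂ] ℂ} {B : X →L[ℂ] X}

lemma pow_apply (hB : IsBilateralWeightedShift e w B) (m : ℕ) (k : ℤ) :
    (B ^ m) (e k) = (∏ i ∈ Finset.Icc (k - m + 1) k, w i) • e (k - m) := by
  induction m generalizing k with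
  | zero => simp
  | succ m ih =>
    have hIcc : Finset.Icc (k - (m + 1 : ℕ) + 1) k
        = insert k (Finset.Icc (k - 1 - m + 1) (k - 1)) := by
      ext x
      simp only [Finset.mem_Icc, Finset.mem_insert]
      omega
    rw [pow_succ, mul_apply_eq_comp, hB, map_smul, ih, smul_smul, hIcc,
      Finset.prod_insert (by simp), sub_sub, Nat.cast_succ, add_comm 1 (m : ℤ)]

lemma coord_pow_apply (hB : IsBilateralWeightedShift e w B)
    (hfe : ∀ j k, f j (e k) = if k = j then 1 else 0)
    (hd : Dense (Submodule.span ℂ (Set.range e) : Set X)) (m : ℕ) (j : ℤ) (x : X) :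
    f j ((B ^ m) x) = (∏ i ∈ Finset.Icc (j + 1) (j + m), w i) * f (j + m) x := by
  suffices (f j).comp (B ^ m) = (∏ i ∈ Finset.Icc (j + 1) (j + m), w i) • f (j + m) from
    congr($this x)
  refine ContinuousLinearMap.ext_on hd ?_
  rintro _ ⟨k, rfl⟩
  simp only [ContinuousLinearMap.comp_apply, smul_apply, hB.pow_apply,
    map_smul, hfe, smul_eq_mul]
  by_cases hk : k = j + m
  · subst hk
    simp
  · rw [if_neg hk, if_neg (by omega), mul_zero, mul_zero]

lemma tendsto_pow_apply_nhds_zero (hB : IsBilateralWeightedShift e w B) (he : ∀ k, ‖e k‖ ≤ 1)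
    {L : Filter ℕ} (h : ∀ j, ∀ M > (0 : ℝ), AbarMjZ w M j ∈ L) {x : X}
    (hx : x ∈ Submodule.span ℂ (Set.range e)) :
    Tendsto (fun m => (B ^ m) x) L (𝓝 0) := by
  induction hx using Submodule.span_induction with
  | mem _ hx =>
    obtain ⟨k, rfl⟩ := hx
    refine squeeze_zero_norm (fun m => ?_)
      (tendsto_prod_norm_nhds_zero_of_forall_mem_AbarMjZ (h k))
    rw [hB.pow_apply, norm_smul, norm_prod]
    exact mul_le_of_le_one_right (by positivity) (he _)
  | zero => simpa using tendsto_const_nhds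
  | add _ _ _ _ hx hy => simpa using hx.add hy
  | smul c _ _ hx => simpa using hx.const_smul c

lemma exists_tendsto_nhds_zero_pow_apply_eq (hB : IsBilateralWeightedShift e w B)
    (hw : ∀ k, w k ≠ 0) (he : ∀ k, ‖e k‖ ≤ 1) {L : Filter ℕ}
    (h : ∀ j, ∀ M > (0 : ℝ), AMjZ w M j ∈ L) {y : X}
    (hy : y ∈ Submodule.span ℂ (Set.range e)) :
    ∃ u : ℕ → X, Tendsto u L (𝓝 0) ∧ ∀ m, (B ^ m) (u m) = y := by
  induction hy using Submodule.span_induction with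
  | mem _ hy =>
    obtain ⟨k, rfl⟩ := hy
    refine ⟨fun m => (∏ i ∈ Finset.Icc (k + 1) (k + m), w i)⁻¹ • e (k + m), ?_, fun m => ?_⟩
    · refine squeeze_zero_norm (fun m => ?_)
        (tendsto_prod_norm_atTop_of_forall_mem_AMjZ (h k)).inv_tendsto_atTop
      rw [norm_smul, norm_inv, norm_prod]
      exact mul_le_of_le_one_right (by positivity) (he _)
    · rw [map_smul, hB.pow_apply, add_sub_cancel_right,
        inv_smul_smul₀ (Finset.prod_ne_zero_iff.2 fun i _ => hw i)]
  | zero => exact ⟨0, tendsto_const_nhds, by simp⟩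
  | add _ _ _ _ hx hy =>
    obtain ⟨u, hu, hBu⟩ := hx
    obtain ⟨v, hv, hBv⟩ := hy
    exact ⟨fun m => u m + v m, by simpa using hu.add hv, fun m => by rw [map_add, hBu, hBv]⟩
  | smul c _ _ hx =>
    obtain ⟨u, hu, hBu⟩ := hx
    exact ⟨fun m => c • u m, by simpa using hu.const_smul c, fun m => by rw [map_smul, hBu]⟩

lemma fOperator_directSumPow (hB : IsBilateralWeightedShift e w B) (hw : ∀ k, w k ≠ 0)
    (he : ∀ k, ‖e k‖ ≤ 1) (hd : Dense (Submodule.span ℂ (Set.range e) : Set X))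
    {𝓕 : Filter ℕ} {r : ℕ}
    (h : ∀ l : ℕ, 1 ≤ l → l ≤ r → ∀ M > (0 : ℝ), ∀ j : ℤ,
      {k : ℕ | l * k ∈ AMjZ w M j} ∈ 𝓕 ∧ {k : ℕ | l * k ∈ AbarMjZ w M j} ∈ 𝓕) :
    FOperator (· ∈ 𝓕) (directSumPow B r) := by
  intro U V hU hV hUne hVne
  have hdense : Dense (Set.univ.pi fun _ : Fin r => (Submodule.span ℂ (Set.range e) : Set X)) :=
    dense_pi _ fun _ _ => hd
  obtain ⟨a, haU, ha⟩ := hdense.inter_open_nonempty U hU hUne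
  obtain ⟨b, hbV, hb⟩ := hdense.inter_open_nonempty V hV hVne
  have hL (i : Fin r) := h ((i : ℕ) + 1) (Nat.le_add_left 1 i) i.isLt
  choose u hu hBu using fun i : Fin r =>
    hB.exists_tendsto_nhds_zero_pow_apply_eq (L := map (((i : ℕ) + 1) * ·) 𝓕) hw he
      (fun j M hM => (hL i M hM j).1) (hb i trivial)
  have hz : Tendsto (fun n => a + fun i => u i (((i : ℕ) + 1) * n)) 𝓕 (𝓝 a) :=
    tendsto_pi_nhds.2 fun i => by simpa using tendsto_const_nhds.add ((hu i).comp tendsto_map)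
  have hTz : Tendsto (fun n => (directSumPow B r ^ n) (a + fun i => u i (((i : ℕ) + 1) * n)))
      𝓕 (𝓝 b) := by
    refine tendsto_pi_nhds.2 fun i => ?_
    simp only [directSumPow_pow_apply, Pi.add_apply, map_add, hBu]
    simpa using ((hB.tendsto_pow_apply_nhds_zero (L := map (((i : ℕ) + 1) * ·) 𝓕) he
      (fun j M hM => (hL i M hM j).2) (ha i trivial)).comp tendsto_map).add_const (b i)
  filter_upwards [hz (hU.mem_nhds haU), hTz (hV.mem_nhds hbV)] with n hzU hTzV
  exact ⟨_, hzU, hTzV⟩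

lemma mem_AMjZ_of_norm_lt (hB : IsBilateralWeightedShift e w B)
    (hfe : ∀ j k, f j (e k) = if k = j then 1 else 0) (hfn : ∀ j x, ‖f j x‖ ≤ ‖x‖)
    (hd : Dense (Submodule.span ℂ (Set.range e) : Set X)) {M : ℝ} (hM : 0 < M) {m : ℕ} {j : ℤ}
    {x : X} (hx : ‖x‖ < 1 / (2 * M)) (hBx : ‖(B ^ m) x - e j‖ < 1 / 2) :
    m ∈ AMjZ w M j := by
  have h := one_half_lt_norm_apply_of_norm_sub_lt hfe hfn hBx
  rw [hB.coord_pow_apply hfe hd, norm_mul, norm_prod] at h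
  have hfx := (hfn (j + m) x).trans_lt hx
  show M < _
  by_contra! hle
  have : M * (1 / (2 * M)) = 1 / 2 := by field_simp
  nlinarith [norm_nonneg (f (j + m) x)]

lemma mem_AbarMjZ_of_norm_lt (hB : IsBilateralWeightedShift e w B)
    (hfe : ∀ j k, f j (e k) = if k = j then 1 else 0) (hfn : ∀ j x, ‖f j x‖ ≤ ‖x‖)
    (hd : Dense (Submodule.span ℂ (Set.range e) : Set X)) {M : ℝ} (hM : 0 < M) {m : ℕ} {j : ℤ}
    {x : X} (hx : ‖x - e j‖ < 1 / 2) (hBx : ‖(B ^ m) x‖ < 1 / (2 * M)) :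
    m ∈ AbarMjZ w M j := by
  have h := one_half_lt_norm_apply_of_norm_sub_lt hfe hfn hx
  have hfBx := (hfn (j - m) ((B ^ m) x)).trans_lt hBx
  rw [hB.coord_pow_apply hfe hd, sub_add_cancel, norm_mul, norm_prod] at hfBx
  have : 1 / (2 * M) = 1 / M * (1 / 2) := by field_simp
  show _ < 1 / M
  nlinarith [Finset.prod_nonneg fun i (_ : i ∈ Finset.Icc (j - m + 1) j) => norm_nonneg (w i)]

lemma forall_mem_of_fOperator_directSumPow (hB : IsBilateralWeightedShift e w B)
    (hfe : ∀ j k, f j (e k) = if k = j then 1 else 0) (hfn : ∀ j x, ‖f j x‖ ≤ ‖x‖)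
    (hd : Dense (Submodule.span ℂ (Set.range e) : Set X)) {𝓕 : Filter ℕ} {r : ℕ}
    (hT : FOperator (· ∈ 𝓕) (directSumPow B r)) :
    ∀ l : ℕ, 1 ≤ l → l ≤ r → ∀ M > (0 : ℝ), ∀ j : ℤ,
      {k : ℕ | l * k ∈ AMjZ w M j} ∈ 𝓕 ∧ {k : ℕ | l * k ∈ AbarMjZ w M j} ∈ 𝓕 := by
  intro l hl hlr M hM j
  obtain ⟨i, rfl⟩ : ∃ i : Fin r, l = (i : ℕ) + 1 := ⟨⟨l - 1, by omega⟩, by simp; omega⟩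
  have hsmall : (Metric.ball (0 : X) (1 / (2 * M))).Nonempty :=
    Metric.nonempty_ball.2 (by positivity)
  have hnear : (Metric.ball (e j) (1 / 2)).Nonempty := Metric.nonempty_ball.2 (by norm_num)
  constructor
  · refine mem_of_superset (hT.directSumPow_pow_mem i Metric.isOpen_ball Metric.isOpen_ball
      hsmall hnear) ?_
    rintro n ⟨x, hx, hBx⟩
    show ((i : ℕ) + 1) * n ∈ AMjZ w M j
    exact hB.mem_AMjZ_of_norm_lt hfe hfn hd hM (mem_ball_zero_iff.1 hx) (mem_ball_iff_norm.1 hBx)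
  · refine mem_of_superset (hT.directSumPow_pow_mem i Metric.isOpen_ball Metric.isOpen_ball
      hnear hsmall) ?_
    rintro n ⟨x, hx, hBx⟩
    show ((i : ℕ) + 1) * n ∈ AbarMjZ w M j
    exact hB.mem_AbarMjZ_of_norm_lt hfe hfn hd hM (mem_ball_iff_norm.1 hx) (mem_ball_zero_iff.1 hBx)

theorem forall_mem_iff_fOperator_directSumPow (hB : IsBilateralWeightedShift e w B)
    (hw : ∀ k, w k ≠ 0) (he : ∀ k, ‖e k‖ ≤ 1) (hfe : ∀ j k, f j (e k) = if k = j then 1 else 0)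
    (hfn : ∀ j x, ‖f j x‖ ≤ ‖x‖) (hd : Dense (Submodule.span ℂ (Set.range e) : Set X))
    (𝓕 : Filter ℕ) (r : ℕ) :
    (∀ l : ℕ, 1 ≤ l → l ≤ r → ∀ M > (0 : ℝ), ∀ j : ℤ,
      {k : ℕ | l * k ∈ AMjZ w M j} ∈ 𝓕 ∧ {k : ℕ | l * k ∈ AbarMjZ w M j} ∈ 𝓕) ↔
      FOperator (· ∈ 𝓕) (directSumPow B r) :=
  ⟨hB.fOperator_directSumPow hw he hd, hB.forall_mem_of_fOperator_directSumPow hfe hfn hd⟩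

end IsBilateralWeightedShift

section C0

variable {α : Type*} [TopologicalSpace α]

lemma ZeroAtInftyContinuousMap.norm_apply_le (x : ZeroAtInftyContinuousMap α ℂ) (m : α) :
    ‖x m‖ ≤ ‖x‖ :=
  x.toBCF.norm_coe_le_norm m

noncomputable def c0Eval (j : α) : ZeroAtInftyContinuousMap α ℂ →L[ℂ] ℂ :=
  LinearMap.mkContinuous
    { toFun := fun x => x j
      map_add' := fun _ _ => rfl
      map_smul' := fun _ _ => rfl } 1
    fun x => by simpa using x.norm_apply_le j

@[simp]
lemma c0Eval_apply (j : α) (x : ZeroAtInftyContinuousMap α ℂ) : c0Eval j x = x j := rfl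

variable [DiscreteTopology α] [DecidableEq α]

lemma c0Single_apply (k m : α) : c0Single k m = if m = k then 1 else 0 := rfl

lemma c0Eval_c0Single (j k : α) : c0Eval j (c0Single k) = if k = j then 1 else 0 := by
  simp [c0Single_apply, eq_comm]

lemma norm_c0Single_le (k : α) : ‖c0Single k‖ ≤ 1 :=
  (BoundedContinuousFunction.norm_le zero_le_one).2 fun m => by
    change ‖c0Single k m‖ ≤ 1
    rw [c0Single_apply]
    split_ifs <;> simp

lemma hasSum_c0Single (x : ZeroAtInftyContinuousMap α ℂ) :
    HasSum (fun k => x k • c0Single k) x := by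
  refine Metric.tendsto_nhds.2 fun ε hε => ?_
  have hfin : {m | ε / 2 ≤ ‖x m‖}.Finite := by
    have h := x.zero_at_infty' (Metric.ball_mem_nhds 0 (half_pos hε))
    rw [Filter.cocompact_eq_cofinite, Filter.mem_map, Filter.mem_cofinite] at h
    exact h.subset fun m hm => by simpa using hm
  filter_upwards [eventually_ge_atTop hfin.toFinset] with s hs
  refine lt_of_le_of_lt ?_ (half_lt_self hε)
  rw [← ZeroAtInftyContinuousMap.dist_toBCF_eq_dist]
  refine (BoundedContinuousFunction.dist_le (half_pos hε).le).2 fun m => ?_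
  have hsum : (∑ k ∈ s, x k • c0Single k) m = if m ∈ s then x m else 0 := by
    rw [← c0Eval_apply, map_sum]
    simp [c0Single_apply]
  change dist ((∑ k ∈ s, x k • c0Single k) m) (x m) ≤ ε / 2
  rw [hsum]
  split_ifs with hm
  · simpa using (half_pos hε).le
  · rw [dist_zero_left]
    exact (not_le.1 fun h => hm (hs (hfin.mem_toFinset.2 h))).le

end C0

section Lp

variable (p : ℝ≥0∞) [Fact (1 ≤ p)]

lemma lp_evalCLM_single (j k : ℤ) :
    lp.evalCLM ℂ (fun _ : ℤ => ℂ) p j (lp.single p k 1) = if k = j then 1 else 0 := by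
  simp [lp.evalCLM, lp.single_apply, Pi.single_apply, eq_comm]

lemma norm_lp_evalCLM_le (j : ℤ) (x : lp (fun _ : ℤ => ℂ) p) :
    ‖lp.evalCLM ℂ (fun _ : ℤ => ℂ) p j x‖ ≤ ‖x‖ :=
  lp.norm_apply_le_norm (zero_lt_one.trans_le Fact.out).ne' x j

lemma norm_lp_single_one_le (k : ℤ) : ‖(lp.single p k (1 : ℂ) : lp (fun _ : ℤ => ℂ) p)‖ ≤ 1 := by
  rw [lp.norm_single (zero_lt_one.trans_le Fact.out), norm_one]

lemma dense_span_range_lp_single (hp : p ≠ ∞) :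
    Dense (Submodule.span ℂ (Set.range fun k : ℤ => lp.single p k (1 : ℂ)) :
      Set (lp (fun _ : ℤ => ℂ) p)) :=
  dense_span_range_of_hasSum fun x => ⟨x, by
    simpa [← lp.single_smul] using lp.hasSum_single hp x⟩

end Lp

theorem stmt9_general (F : Set (Set ℕ)) (_hne : F.Nonempty)
    (_hup : ∀ A ∈ F, ∀ B : Set ℕ, A ⊆ B → B ∈ F)
    (_hcap : ∀ A ∈ F, ∀ B ∈ F, A ∩ B ∈ F)
    (r : ℕ) :
    (∀ w : ℤ → ℂ, (∀ k, w k ≠ 0) → BddWeight w →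
      ∀ B : ZeroAtInftyContinuousMap ℤ ℂ →L[ℂ] ZeroAtInftyContinuousMap ℤ ℂ,
        IsBilateralWeightedShift c0Single w B →
        ((∀ l : ℕ, 1 ≤ l → l ≤ r → ∀ M > (0 : ℝ), ∀ j : ℤ,
            {k : ℕ | l * k ∈ AMjZ w M j} ∈ F ∧ {k : ℕ | l * k ∈ AbarMjZ w M j} ∈ F) ↔
          FOperator (· ∈ F) (directSumPow B r))) ∧
    ∀ (p : ℝ≥0∞) [Fact (1 ≤ p)], p ≠ ∞ →
      ∀ w : ℤ → ℂ, (∀ k, w k ≠ 0) → BddWeight w →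
      ∀ B : lp (fun _ : ℤ => ℂ) p →L[ℂ] lp (fun _ : ℤ => ℂ) p,
        IsBilateralWeightedShift (fun k => lp.single p k 1) w B →
        ((∀ l : ℕ, 1 ≤ l → l ≤ r → ∀ M > (0 : ℝ), ∀ j : ℤ,
            {k : ℕ | l * k ∈ AMjZ w M j} ∈ F ∧ {k : ℕ | l * k ∈ AbarMjZ w M j} ∈ F) ↔
          FOperator (· ∈ F) (directSumPow B r)) := by
  let 𝓕 := filterOfFamily F _hne _hup _hcap
  refine ⟨fun w hw _ B hB => ?_, fun p _ hp w hw _ B hB => ?_⟩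
  · exact hB.forall_mem_iff_fOperator_directSumPow hw norm_c0Single_le c0Eval_c0Single
      (fun j x => x.norm_apply_le j) (dense_span_range_of_hasSum fun x => ⟨x, hasSum_c0Single x⟩)
      𝓕 r
  · exact hB.forall_mem_iff_fOperator_directSumPow hw (norm_lp_single_one_le p)
      (lp_evalCLM_single p) (norm_lp_evalCLM_le p) (dense_span_range_lp_single p hp) 𝓕 r

theorem stmt9 (F : Set (Set ℕ)) (_hne : F.Nonempty)
    (_hinf : ∀ A ∈ F, A.Infinite)
    (_hup : ∀ A ∈ F, ∀ B : Set ℕ, A ⊆ B → B ∈ F)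
    (_hcap : ∀ A ∈ F, ∀ B ∈ F, A ∩ B ∈ F)
    (r : ℕ) :
    (∀ w : ℤ → ℂ, (∀ k, w k ≠ 0) → BddWeight w →
      ∀ B : ZeroAtInftyContinuousMap ℤ ℂ →L[ℂ] ZeroAtInftyContinuousMap ℤ ℂ,
        IsBilateralWeightedShift c0Single w B →
        ((∀ l : ℕ, 1 ≤ l → l ≤ r → ∀ M > (0 : ℝ), ∀ j : ℤ,
            {k : ℕ | l * k ∈ AMjZ w M j} ∈ F ∧ {k : ℕ | l * k ∈ AbarMjZ w M j} ∈ F) ↔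
          FOperator (· ∈ F) (directSumPow B r))) ∧
    ∀ (p : ℝ≥0∞) [Fact (1 ≤ p)], p ≠ ∞ →
      ∀ w : ℤ → ℂ, (∀ k, w k ≠ 0) → BddWeight w →
      ∀ B : lp (fun _ : ℤ => ℂ) p →L[ℂ] lp (fun _ : ℤ => ℂ) p,
        IsBilateralWeightedShift (fun k => lp.single p k 1) w B →
        ((∀ l : ℕ, 1 ≤ l → l ≤ r → ∀ M > (0 : ℝ), ∀ j : ℤ,
            {k : ℕ | l * k ∈ AMjZ w M j} ∈ F ∧ {k : ℕ | l * k ∈ AbarMjZ w M j} ∈ F) ↔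
          FOperator (· ∈ F) (directSumPow B r)) :=
  stmt9_general F _hne _hup _hcap r
end

section
/- Let 1 ≤ p < ∞ and let w be the unilateral weight given by w_ν = ((ν+1)/ν)^{1/(2p)} for ν ≥ 1. Then the unilateral weighted backward shift B_w on ℓ^p(ℤ₊) is mixing, and for every x ∈ ℓ^p(ℤ₊) the set {n ∈ ℕ : ‖B_w^n x − e_0‖_p < 1/2} has upper Banach density equal to zero. -/
open Filter Topology
open scoped ENNReal

/-!
Write `W j n = w (j+1) ⋯ w (j+n)`, so that `B ^ n` maps `e (j+n)` to `W j n • e j`; here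
`‖W 0 n‖ = (n+1) ^ (1/(2p))`. Mixing is the classical criterion `‖W 0 n‖ → ∞`: a finitely supported
`v` has a preimage under `B ^ n` supported far out and of norm `O(max_j 1/‖W j n‖)`.

For the density, let `A = {n | ‖B^n x - e₀‖ < 1/2}`. The zeroth coordinate gives
`‖x m‖ > 1/(2‖W 0 m‖)` for `m ∈ A`. If `n` and `n + j` lie in `A`, the `j`-th coordinate of
`B^n x - e₀` is `W j n * x (n+j)`, of modulus `> 1/(2‖W 0 j‖) = (j+1)^(-1/(2p))/2`, so the
`ℓ^p` bound yields `∑ (j+1)^(-1/2) < 1` over those `j`. Hence every window of length `s` meets `A`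
in at most `√s + 1` points.
-/

noncomputable def weightProd (w : ℕ → ℂ) (j n : ℕ) : ℂ :=
  ∏ i ∈ Finset.Ioc j (j + n), w i

@[simp] lemma weightProd_zero (w : ℕ → ℂ) (j : ℕ) : weightProd w j 0 = 1 := by
  simp [weightProd]

lemma weightProd_succ (w : ℕ → ℂ) (j n : ℕ) :
    weightProd w j (n + 1) = weightProd w j n * w (j + n + 1) :=
  Finset.prod_Ioc_succ_top (Nat.le_add_right j n) w

lemma weightProd_add (w : ℕ → ℂ) (i j n : ℕ) :
    weightProd w i (j + n) = weightProd w i j * weightProd w (i + j) n := by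
  simp only [weightProd, ← add_assoc]
  exact (Finset.prod_Ioc_consecutive w (Nat.le_add_right i j) (Nat.le_add_right _ n)).symm

lemma norm_weightProd_zero_of_eq_rpow {w : ℕ → ℂ} {a : ℝ}
    (hw : ∀ ν : ℕ, 1 ≤ ν → w ν = ((((ν : ℝ) + 1) / ν) ^ a : ℝ)) (n : ℕ) :
    ‖weightProd w 0 n‖ = ((n : ℝ) + 1) ^ a := by
  induction n with
  | zero => simp
  | succ n ih =>
    have hn : (0 : ℝ) < n + 1 := by positivity
    rw [weightProd_succ, norm_mul, ih, zero_add, hw (n + 1) le_add_self, Complex.norm_real,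
      Real.norm_of_nonneg (by positivity), ← Real.mul_rpow hn.le (by positivity)]
    push_cast
    rw [mul_div_cancel₀ _ hn.ne']

section Tendsto

variable {w : ℕ → ℂ} (hw : Tendsto (fun n => ‖weightProd w 0 n‖) atTop atTop)
include hw

lemma weightProd_ne_zero_of_tendsto (j n : ℕ) : weightProd w j n ≠ 0 := by
  obtain ⟨m, hm⟩ := (hw.eventually_gt_atTop 0).exists_forall_of_atTop
  have h := norm_pos_iff.1 (hm (j + n + m) le_add_self)
  rw [weightProd_add, weightProd_add, zero_add] at h
  exact right_ne_zero_of_mul (left_ne_zero_of_mul h)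

lemma tendsto_norm_weightProd_of_tendsto (j : ℕ) :
    Tendsto (fun n => ‖weightProd w j n‖) atTop atTop := by
  have hj : 0 < ‖weightProd w 0 j‖ := norm_pos_iff.2 (weightProd_ne_zero_of_tendsto hw 0 j)
  refine ((tendsto_add_atTop_iff_nat j).2 hw |>.atTop_div_const hj).congr fun n => ?_
  rw [add_comm n j, weightProd_add, zero_add, norm_mul, mul_div_cancel_left₀ _ hj.ne']

end Tendsto

namespace IsUnilateralWeightedShift

section General

variable {X : Type*} [NormedAddCommGroup X] [NormedSpace ℂ X] {e : ℕ → X} {w : ℕ → ℂ}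
  {B : X →L[ℂ] X}

lemma pow_apply_of_lt (hB : IsUnilateralWeightedShift e w B) {n k : ℕ} (hk : k < n) :
    (B ^ n) (e k) = 0 := by
  induction n generalizing k with
  | zero => omega
  | succ n ih =>
    rw [pow_succ, mul_apply_eq_comp]
    cases k with
    | zero => rw [hB.1, map_zero]
    | succ k => rw [hB.2 k, map_smul, ih (by omega), smul_zero]

lemma pow_apply_add (hB : IsUnilateralWeightedShift e w B) (n k : ℕ) :
    (B ^ n) (e (n + k)) = weightProd w k n • e k := by
  induction n generalizing k with
  | zero => simp
  | succ n ih =>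
    rw [pow_succ, mul_apply_eq_comp, add_right_comm, hB.2, map_smul, ih, smul_smul,
      weightProd_succ, mul_comm, add_comm n k]

end General

variable {p : ℝ≥0∞} [Fact (1 ≤ p)] {w : ℕ → ℂ}
  {B : lp (fun _ : ℕ => ℂ) p →L[ℂ] lp (fun _ : ℕ => ℂ) p}

lemma pow_apply_lp (hp : p ≠ ∞) (hB : IsUnilateralWeightedShift (fun n => lp.single p n 1) w B)
    (f : lp (fun _ : ℕ => ℂ) p) (n j : ℕ) :
    (B ^ n) f j = weightProd w j n * f (n + j) := by
  have hterm : ∀ i, (B ^ n) (lp.single p i (f i)) j =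
      if i = n + j then weightProd w j n * f (n + j) else 0 := by
    intro i
    rw [← mul_one (f i), ← smul_eq_mul, lp.single_smul, map_smul, lp.coeFn_smul, Pi.smul_apply]
    rcases lt_or_ge i n with hi | hi
    · rw [hB.pow_apply_of_lt hi, if_neg (by omega)]
      simp
    · obtain ⟨k, rfl⟩ := Nat.exists_eq_add_of_le hi
      rw [hB.pow_apply_add, lp.coeFn_smul, Pi.smul_apply, lp.single_apply]
      by_cases hk : k = j
      · subst hk; simp [mul_comm]
      · simp [hk, Ne.symm hk]
  have hsum : HasSum (fun i => (B ^ n) (lp.single p i (f i)) j) ((B ^ n) f j) :=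
    (lp.hasSum_single hp f).mapL ((lp.evalCLM ℂ _ p j).comp (B ^ n))
  simp only [hterm] at hsum
  exact hsum.unique (hasSum_ite_eq (n + j) _)

lemma mixingOp_of_tendsto (hp : p ≠ ∞)
    (hB : IsUnilateralWeightedShift (fun n => lp.single p n 1) w B)
    (hw : Tendsto (fun n => ‖weightProd w 0 n‖) atTop atTop) : MixingOp B := by
  intro U V hU hV ⟨u₀, hu₀⟩ ⟨v₀, hv₀⟩
  obtain ⟨N, hN⟩ :=
    ((lp.hasSum_single hp u₀).tendsto_sum_nat.eventually (hU.mem_nhds hu₀)).exists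
  obtain ⟨M, hM⟩ :=
    ((lp.hasSum_single hp v₀).tendsto_sum_nat.eventually (hV.mem_nhds hv₀)).exists
  set u := ∑ i ∈ Finset.range N, lp.single p i (u₀ i)
  set v := ∑ i ∈ Finset.range M, lp.single p i (v₀ i)
  let z : ℕ → lp (fun _ : ℕ => ℂ) p := fun n =>
    ∑ j ∈ Finset.range M, (v₀ j / weightProd w j n) • lp.single p (n + j) 1
  have hp₀ : 0 < p := zero_lt_one.trans_le Fact.out
  have hBu : ∀ n ≥ N, (B ^ n) u = 0 := fun n hn => by
    refine (map_sum _ _ _).trans (Finset.sum_eq_zero fun i hi => ?_)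
    rw [← mul_one (u₀ i), ← smul_eq_mul, lp.single_smul, map_smul,
      hB.pow_apply_of_lt ((Finset.mem_range.1 hi).trans_le hn), smul_zero]
  have hBz : ∀ n, (B ^ n) (z n) = v := fun n => by
    refine (map_sum _ _ _).trans (Finset.sum_congr rfl fun j _ => ?_)
    rw [map_smul, hB.pow_apply_add, smul_smul,
      div_mul_cancel₀ _ (weightProd_ne_zero_of_tendsto hw j n), ← lp.single_smul, smul_eq_mul,
      mul_one]
  have hz : Tendsto z atTop (𝓝 0) := by
    rw [← Finset.sum_const_zero (s := Finset.range M)]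
    refine tendsto_finsetSum _ fun j _ => tendsto_zero_iff_norm_tendsto_zero.2 ?_
    simp only [norm_smul, lp.norm_single hp₀, norm_one, mul_one, norm_div]
    exact tendsto_const_nhds.div_atTop (tendsto_norm_weightProd_of_tendsto hw j)
  have hzU : ∀ᶠ n in atTop, u + z n ∈ U :=
    (tendsto_const_nhds.add hz).eventually (hU.mem_nhds (by rwa [add_zero]))
  rw [Nat.cofinite_eq_atTop]
  filter_upwards [hzU, eventually_ge_atTop N] with n hn hnN
  exact ⟨u + z n, hn, by rwa [map_add, hBu n hnN, hBz, zero_add]⟩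

lemma one_half_lt_norm_weightProd_mul (hp : p ≠ ∞)
    (hB : IsUnilateralWeightedShift (fun n => lp.single p n 1) w B)
    {x : lp (fun _ : ℕ => ℂ) p} {m : ℕ} (hm : ‖(B ^ m) x - lp.single p 0 1‖ < 1 / 2) :
    1 / 2 < ‖weightProd w 0 m‖ * ‖x m‖ := by
  have h₀ :=
    lp.norm_apply_le_norm (zero_lt_one.trans_le Fact.out).ne' ((B ^ m) x - lp.single p 0 1) 0
  rw [lp.coeFn_sub, Pi.sub_apply, hB.pow_apply_lp hp, lp.single_apply_self, add_zero] at h₀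
  have h₁ := norm_sub_norm_le (1 : ℂ) (weightProd w 0 m * x m)
  rw [norm_sub_rev, norm_one, norm_mul] at h₁
  linarith

lemma sum_norm_weightProd_rpow_neg_lt_one (hp : p ≠ ∞)
    (hB : IsUnilateralWeightedShift (fun n => lp.single p n 1) w B)
    {x : lp (fun _ : ℕ => ℂ) p} {n : ℕ} (hn : ‖(B ^ n) x - lp.single p 0 1‖ < 1 / 2)
    (G : Finset ℕ) (hG : ∀ j ∈ G, 0 < j ∧ ‖(B ^ (n + j)) x - lp.single p 0 1‖ < 1 / 2) :
    ∑ j ∈ G, ‖weightProd w 0 j‖ ^ (-p.toReal) < 1 := by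
  have hq : 0 < p.toReal := ENNReal.toReal_pos (zero_lt_one.trans_le Fact.out).ne' hp
  set y := (B ^ n) x - lp.single p 0 1
  have hterm : ∀ j ∈ G, (1 / 2 : ℝ) ^ p.toReal * ‖weightProd w 0 j‖ ^ (-p.toReal) ≤
      ‖y j‖ ^ p.toReal := by
    intro j hj
    obtain ⟨hj₀, hjA⟩ := hG j hj
    have hyj : ‖y j‖ = ‖weightProd w j n‖ * ‖x (n + j)‖ := by
      rw [lp.coeFn_sub, Pi.sub_apply, hB.pow_apply_lp hp, lp.single_apply_ne p 0 _ hj₀.ne',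
        sub_zero, norm_mul]
    have hlow := one_half_lt_norm_weightProd_mul hp hB hjA
    rw [add_comm n j, weightProd_add, zero_add, norm_mul, mul_assoc, add_comm j n, ← hyj] at hlow
    have hW : 0 < ‖weightProd w 0 j‖ :=
      lt_of_le_of_ne (norm_nonneg _) fun h => by rw [← h, zero_mul] at hlow; norm_num at hlow
    rw [Real.rpow_neg hW.le, ← Real.inv_rpow hW.le, ← Real.mul_rpow (by norm_num) (by positivity)]
    exact Real.rpow_le_rpow (by positivity)
      ((div_lt_iff₀' hW).2 hlow).le hq.le
  have hy : ‖y‖ ^ p.toReal < (1 / 2) ^ p.toReal := Real.rpow_lt_rpow (norm_nonneg _) hn hq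
  refine lt_of_mul_lt_mul_left ?_ (by positivity : (0 : ℝ) ≤ (1 / 2) ^ p.toReal)
  calc (1 / 2 : ℝ) ^ p.toReal * ∑ j ∈ G, ‖weightProd w 0 j‖ ^ (-p.toReal)
      ≤ ∑ j ∈ G, ‖y j‖ ^ p.toReal := by rw [Finset.mul_sum]; exact Finset.sum_le_sum hterm
    _ ≤ ‖y‖ ^ p.toReal := lp.sum_rpow_le_norm_rpow hq y G
    _ < (1 / 2) ^ p.toReal * 1 := by rwa [mul_one]

end IsUnilateralWeightedShift

lemma blockCount_le_rpow_add_one {A : Set ℕ} {r : ℝ} (hr : 0 ≤ r)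
    (hA : ∀ n ∈ A, ∀ G : Finset ℕ, (∀ j ∈ G, 0 < j ∧ n + j ∈ A) →
      ∑ j ∈ G, ((j : ℝ) + 1) ^ (-r) < 1)
    (k s : ℕ) : (blockCount A k s : ℝ) ≤ (s : ℝ) ^ r + 1 := by
  classical
  set F := (Finset.Icc (k + 1) (k + s)).filter (· ∈ A)
  have hF : blockCount A k s = F.card := by
    have : A ∩ Set.Icc (k + 1) (k + s) = ↑F := by ext; simp [F, and_comm]
    rw [blockCount, this, Nat.card_coe_set_eq, Set.ncard_coe_finset]
  rcases F.eq_empty_or_nonempty with hF₀ | hF₀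
  · rw [hF, hF₀, Finset.card_empty, Nat.cast_zero]
    positivity
  -- measure the other elements of the block from its least element `n`
  set n := F.min' hF₀
  obtain ⟨hnI, hnA⟩ := Finset.mem_filter.1 (F.min'_mem hF₀)
  have hnI := Finset.mem_Icc.1 hnI
  set G := (F.erase n).image (· - n)
  have hcard : F.card = G.card + 1 := by
    rw [Finset.card_image_of_injOn, Finset.card_erase_add_one (F.min'_mem hF₀)]
    intro m hm m' hm' h
    have := F.min'_le m (Finset.mem_of_mem_erase hm)
    have := F.min'_le m' (Finset.mem_of_mem_erase hm')
    simp only at h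
    omega
  have hG : ∀ j ∈ G, 0 < j ∧ n + j ∈ A ∧ j + 1 ≤ s := by
    simp only [G, Finset.mem_image, Finset.mem_erase]
    rintro _ ⟨m, ⟨hmn, hmF⟩, rfl⟩
    have hnm := F.min'_le m hmF
    obtain ⟨hmI, hmA⟩ := Finset.mem_filter.1 hmF
    have hmI := Finset.mem_Icc.1 hmI
    refine ⟨by omega, by rwa [Nat.add_sub_cancel' hnm], by omega⟩
  have hs : (0 : ℝ) < s := by exact_mod_cast (show 0 < s by omega)
  have hGs : G.card * (s : ℝ) ^ (-r) < 1 :=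
    calc G.card * (s : ℝ) ^ (-r) = ∑ _j ∈ G, (s : ℝ) ^ (-r) := by
          rw [Finset.sum_const, nsmul_eq_mul]
      _ ≤ ∑ j ∈ G, ((j : ℝ) + 1) ^ (-r) := Finset.sum_le_sum fun j hj =>
          Real.rpow_le_rpow_of_nonpos (by positivity) (by exact_mod_cast (hG j hj).2.2)
            (neg_nonpos.2 hr)
      _ < 1 := hA n hnA G fun j hj => ⟨(hG j hj).1, (hG j hj).2.1⟩
  rw [Real.rpow_neg hs.le, ← div_eq_mul_inv, div_lt_one (by positivity)] at hGs
  rw [hF, hcard]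
  push_cast
  linarith

lemma upperBanachDensity_eq_zero_of_blockCount_le {A : Set ℕ} {f : ℕ → ℝ}
    (hA : ∀ k s, (blockCount A k s : ℝ) ≤ f s) (hf : Tendsto (fun s => f s / s) atTop (𝓝 0)) :
    upperBanachDensity A = 0 := by
  have hbdd : ∀ s, 0 ≤ limsup (fun k => (blockCount A k s : ℝ)) atTop ∧
      limsup (fun k => (blockCount A k s : ℝ)) atTop ≤ f s := fun s =>
    ⟨le_limsup_of_frequently_le (Frequently.of_forall fun k => Nat.cast_nonneg _)
        (isBoundedUnder_of ⟨f s, fun k => hA k s⟩),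
      limsup_le_of_le (isCoboundedUnder_le_of_le atTop fun k => Nat.cast_nonneg _)
        (Eventually.of_forall fun k => hA k s)⟩
  exact Tendsto.limsup_eq <| squeeze_zero (fun s => div_nonneg (hbdd s).1 s.cast_nonneg)
    (fun s => div_le_div_of_nonneg_right (hbdd s).2 s.cast_nonneg) hf

lemma tendsto_rpow_add_one_div_atTop {r : ℝ} (hr : r < 1) :
    Tendsto (fun s : ℕ => ((s : ℝ) ^ r + 1) / s) atTop (𝓝 0) := by
  have h := ((tendsto_rpow_neg_atTop (sub_pos.2 hr)).add tendsto_inv_atTop_zero).comp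
    (tendsto_natCast_atTop_atTop (R := ℝ))
  rw [add_zero] at h
  refine h.congr' ((eventually_gt_atTop 0).mono fun s hs => ?_)
  have hs' : (0 : ℝ) < s := by exact_mod_cast hs
  simp only [Function.comp_apply, neg_sub, Real.rpow_sub hs', Real.rpow_one, add_div, one_div]

theorem stmt15 (p : ℝ≥0∞) [Fact (1 ≤ p)] (_hp : p ≠ ∞)
    (w : ℕ → ℂ)
    (_hw : ∀ ν : ℕ, 1 ≤ ν → w ν = ((((ν : ℝ) + 1) / ν) ^ (1 / (2 * p.toReal)) : ℝ))
    (B : lp (fun _ : ℕ => ℂ) p →L[ℂ] lp (fun _ : ℕ => ℂ) p)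
    (_hB : IsUnilateralWeightedShift (fun n => lp.single p n 1) w B) :
    MixingOp B ∧
      ∀ x : lp (fun _ : ℕ => ℂ) p,
        upperBanachDensity {n : ℕ | ‖(B ^ n) x - lp.single p 0 1‖ < 1 / 2} = 0 := by
  have hq : 0 < p.toReal := ENNReal.toReal_pos (zero_lt_one.trans_le Fact.out).ne' _hp
  have hW := norm_weightProd_zero_of_eq_rpow _hw
  have hexp : ∀ j : ℕ, ‖weightProd w 0 j‖ ^ (-p.toReal) = ((j : ℝ) + 1) ^ (-(1 / 2 : ℝ)) := by
    intro j
    rw [hW, ← Real.rpow_mul (by positivity)]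
    congr 1
    field_simp
  refine ⟨_hB.mixingOp_of_tendsto _hp ?_, fun x => ?_⟩
  · simp only [hW]
    exact (tendsto_rpow_atTop (by positivity)).comp
      (tendsto_atTop_add_const_right _ 1 tendsto_natCast_atTop_atTop)
  · refine upperBanachDensity_eq_zero_of_blockCount_le
      (blockCount_le_rpow_add_one (by norm_num) fun n hn G hG => ?_)
      (tendsto_rpow_add_one_div_atTop (by norm_num : (1 / 2 : ℝ) < 1))
    simpa only [hexp] using _hB.sum_norm_weightProd_rpow_neg_lt_one _hp hn G hG
end
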